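/- Let y : Fin 4 → ℝ have all components positive, let gᵢⱼ(y) = (1 − 2δᵢⱼ)·√(y₁y₂y₃y₄)/(8·yᵢ·yⱼ), and let C^{m}_{jp}(y) = A^{m}_{jp}·yₘ/(yⱼ·y_p) with A^{m}_{jp} = (2δ^{m}_{j} + 2δ^{m}_{p} + 2δ_{jp} − 8δ^{m}_{j}δ_{jp} − 1)/8. Then the vertical covariant derivative of g with respect to the Cartan canonical connection vanishes: for all j, k, p ∈ {1,2,3,4}, ∂g_{jk}/∂y_p(y) = ∑_{m=1}^{4} g_{mk}(y)·C^{m}_{jp}(y) + ∑_{m=1}^{4} g_{jm}(y)·C^{m}_{kp}(y). -/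

import Mathlib

open scoped BigOperators

/-- Kronecker delta on `Fin 4`, valued in `ℝ`. -/
noncomputable def kd (i j : Fin 4) : ℝ := if i = j then 1 else 0

/-- The product `G(y) = y₁·y₂·y₃·y₄`. -/
noncomputable def Gfun (y : Fin 4 → ℝ) : ℝ := y 0 * y 1 * y 2 * y 3

/-- Partial derivative of `f` with respect to the `i`-th coordinate at `y`. -/
noncomputable def pd (f : (Fin 4 → ℝ) → ℝ) (i : Fin 4) (y : Fin 4 → ℝ) : ℝ :=
  fderiv ℝ f y (Pi.single i 1)

/-- Fundamental metrical tensor of the Berwald-Moór metric. -/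
noncomputable def gBM (y : Fin 4 → ℝ) (i j : Fin 4) : ℝ :=
  (1 - 2 * kd i j) * Real.sqrt (Gfun y) / (8 * y i * y j)

/-- Inverse of the fundamental metrical tensor of the Berwald-Moór metric. -/
noncomputable def gBMinv (y : Fin 4 → ℝ) (j k : Fin 4) : ℝ :=
  2 * (1 - 2 * kd j k) * y j * y k / Real.sqrt (Gfun y)

/-- The constants `A^i_{jk}`. -/
noncomputable def Acoef (i j k : Fin 4) : ℝ :=
  (2 * kd i j + 2 * kd i k + 2 * kd j k - 8 * kd i j * kd j k - 1) / 8

/-- Vertical Cartan coefficients `C^i_{jk}(y) = A^i_{jk}·yᵢ/(yⱼ·y_k)`. -/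
noncomputable def CBM (y : Fin 4 → ℝ) (i j k : Fin 4) : ℝ :=
  Acoef i j k * y i / (y j * y k)

/-! `g_{jk}` is, up to a constant, the monomial `√G / (y_j y_k)`, so its logarithmic derivative in
`y_p` is `(1/2 - δ_{jp} - δ_{kp}) / y_p`. In `g_{mk} C^m_{jp}` the factors `y_m` cancel, leaving
`(1 - 2δ_{mk}) A^m_{jp} √G / (8 y_j y_k y_p)`. In dimension 4 the constants `A^m_{jp}` are
trace-free in `m`, so the contraction with `1 - 2δ_{mk}` is `-2 A^k_{jp}`, and
`-2 (A^k_{jp} + A^j_{kp}) = (1 - 2δ_{jk}) (1/2 - δ_{jp} - δ_{kp})` is exactly the logarithmic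
derivative factor. -/

open Finset

theorem kd_comm (i j : Fin 4) : kd i j = kd j i := by
  simp only [kd, eq_comm]

theorem sum_kd (k : Fin 4) : ∑ m, kd m k = 1 := by
  simp [kd]

theorem sum_kd_mul (k : Fin 4) (f : Fin 4 → ℝ) : ∑ m, kd m k * f m = f k := by
  simp [kd]

theorem kd_mul_apply (y : Fin 4 → ℝ) (i p : Fin 4) : kd i p * y i = kd i p * y p := by
  by_cases h : i = p <;> simp [kd, h]

-- The only place where the dimension enters: `∑ m, 1 = 4`.
theorem sum_Acoef (j p : Fin 4) : ∑ m, Acoef m j p = 0 := by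
  simp only [Acoef, ← sum_div, sum_sub_distrib, sum_add_distrib, ← mul_sum, ← sum_mul, sum_kd,
    sum_const, card_univ, Fintype.card_fin]
  ring

theorem sum_one_sub_two_kd_mul_Acoef (k j p : Fin 4) :
    ∑ m, (1 - 2 * kd m k) * Acoef m j p = -2 * Acoef k j p := by
  simp only [sub_mul, sum_sub_distrib, one_mul, mul_assoc, ← mul_sum, sum_kd_mul, sum_Acoef]
  ring

theorem Acoef_add_Acoef (j k p : Fin 4) :
    -2 * (Acoef k j p + Acoef j k p) = (1 - 2 * kd j k) * (1 / 2 - kd j p - kd k p) := by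
  simp only [Acoef, kd_comm k j]
  ring

theorem gBM_comm (y : Fin 4 → ℝ) (i j : Fin 4) : gBM y i j = gBM y j i := by
  simp only [gBM, kd_comm i j, mul_right_comm (8 : ℝ) (y i)]

theorem gBM_mul_CBM {y : Fin 4 → ℝ} {m : Fin 4} (hm : y m ≠ 0) (i l p : Fin 4) :
    gBM y m i * CBM y m l p
      = (1 - 2 * kd m i) * Acoef m l p * (√(Gfun y) / (8 * y i * y l * y p)) := by
  simp only [gBM, CBM]
  field_simp

theorem Gfun_eq_prod (y : Fin 4 → ℝ) : Gfun y = ∏ i, y i := by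
  simp [Gfun, Fin.prod_univ_four]

theorem prod_add_smul_single_one {ι R : Type*} [Fintype ι] [DecidableEq ι] [CommRing R]
    (y : ι → R) (p : ι) (t : R) :
    ∏ i, (y + t • Pi.single p 1 : ι → R) i = (y p + t) * ∏ i ∈ univ.erase p, y i := by
  have hupdate : y + t • Pi.single p (1 : R) = Function.update y p (y p + t) := by
    ext i
    by_cases h : i = p <;> simp [h, Function.update_of_ne]
  rw [hupdate, prod_update_of_mem (mem_univ p), sdiff_singleton_eq_erase]

theorem hasDerivAt_prod_add_smul_single_one {ι 𝕜 : Type*} [Fintype ι] [DecidableEq ι]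
    [NontriviallyNormedField 𝕜] (y : ι → 𝕜) (p : ι) :
    HasDerivAt (fun t : 𝕜 => ∏ i, (y + t • Pi.single p 1 : ι → 𝕜) i)
      (∏ i ∈ univ.erase p, y i) 0 := by
  simp only [prod_add_smul_single_one]
  simpa using ((hasDerivAt_id' (0 : 𝕜)).const_add (y p)).mul_const (∏ i ∈ univ.erase p, y i)

theorem hasDerivAt_apply_add_smul_single_one (y : Fin 4 → ℝ) (i p : Fin 4) :
    HasDerivAt (fun t : ℝ => (y + t • Pi.single p 1 : Fin 4 → ℝ) i) (kd i p) 0 := by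
  have hline : (fun t : ℝ => (y + t • Pi.single p 1 : Fin 4 → ℝ) i) = fun t => y i + t * kd i p := by
    funext t
    simp [kd, Pi.single_apply]
  rw [hline]
  simpa using ((hasDerivAt_id' (0 : ℝ)).mul_const (kd i p)).const_add (y i)

theorem pd_eq_of_hasDerivAt {f : (Fin 4 → ℝ) → ℝ} {p : Fin 4} {y : Fin 4 → ℝ} {d : ℝ}
    (hf : DifferentiableAt ℝ f y)
    (h : HasDerivAt (fun t : ℝ => f (y + t • Pi.single p 1)) d 0) : pd f p y = d := by
  rw [pd, ← hf.lineDeriv_eq_fderiv]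
  exact HasLineDerivAt.lineDeriv h

theorem Gfun_pos {y : Fin 4 → ℝ} (hy : ∀ i, 0 < y i) : 0 < Gfun y := by
  rw [Gfun_eq_prod]
  exact prod_pos fun i _ => hy i

theorem differentiableAt_gBM {y : Fin 4 → ℝ} (hy : ∀ i, 0 < y i) (j k : Fin 4) :
    DifferentiableAt ℝ (fun z => gBM z j k) y := by
  have hG := (Gfun_pos hy).ne'
  have hj := (hy j).ne'
  have hk := (hy k).ne'
  unfold gBM Gfun at *
  fun_prop (disch := simp [*])

theorem hasDerivAt_gBM_add_smul_single_one {y : Fin 4 → ℝ} (hy : ∀ i, 0 < y i) (j k p : Fin 4) :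
    HasDerivAt (fun t : ℝ => gBM (y + t • Pi.single p 1) j k)
      (gBM y j k * (1 / 2 - kd j p - kd k p) / y p) 0 := by
  have hG := Gfun_pos hy
  have hGline := hasDerivAt_prod_add_smul_single_one y p
  simp only [← Gfun_eq_prod] at hGline
  have hsqrt := hGline.sqrt (by simpa using hG.ne')
  have hden := ((hasDerivAt_apply_add_smul_single_one y j p).const_mul 8).mul
    (hasDerivAt_apply_add_smul_single_one y k p)
  simp only [zero_smul, add_zero] at hsqrt hden
  have hj := hy j
  have hk := hy k
  have hp := hy p
  refine ((hsqrt.const_mul (1 - 2 * kd j k)).div hden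
    (by simp only [Pi.mul_apply, zero_smul, add_zero]; positivity)).congr_deriv ?_
  have hs : √(Gfun y) ^ 2 = y p * ∏ i ∈ univ.erase p, y i := by
    rw [Real.sq_sqrt hG.le, Gfun_eq_prod, mul_prod_erase univ y (mem_univ p)]
  simp only [gBM, Pi.mul_apply, zero_smul, add_zero]
  field_simp
  linear_combination (1 - 2 * kd j k) * (-(y j * y k) * hs
    + 2 * √(Gfun y) ^ 2 * y k * kd_mul_apply y j p + 2 * √(Gfun y) ^ 2 * y j * kd_mul_apply y k p)

theorem pd_gBM {y : Fin 4 → ℝ} (hy : ∀ i, 0 < y i) (j k p : Fin 4) :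
    pd (fun z => gBM z j k) p y = gBM y j k * (1 / 2 - kd j p - kd k p) / y p :=
  pd_eq_of_hasDerivAt (differentiableAt_gBM hy j k) (hasDerivAt_gBM_add_smul_single_one hy j k p)

/-- vertical metricity of the Cartan connection: g_{jk}|_{(p)} = 0. -/
theorem berwald_moor_vertical_metricity
    (y : Fin 4 → ℝ) (hy : ∀ i, 0 < y i) (j k p : Fin 4) :
    pd (fun z => gBM z j k) p y
      = (∑ m, gBM y m k * CBM y m j p) + ∑ m, gBM y j m * CBM y m k p := by
  simp only [gBM_comm y j, gBM_mul_CBM (hy _).ne', ← sum_mul, sum_one_sub_two_kd_mul_Acoef]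
  rw [pd_gBM hy, mul_right_comm 8 (y k), ← add_mul, ← mul_add, Acoef_add_Acoef, gBM]
  field_simp
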